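/- (Softmax attention as an expectation) With p_n(ω) = N(ω;0,I) Σ_{m=1}^M ξ(q,ω) ξ(k_m,ω) / Z and f_n(ω) = (Σ_m ξ(q,ω) ξ(k_m,ω) v_m)/(Σ_{m'} ξ(q,ω) ξ(k_{m'},ω)), where Z = Σ_m exp(q·k_m) and ξ(x,ω) = exp(ωᵀx − ‖x‖²/2), p_n is a probability density and E_{ω∼p_n}[f_n(ω)] = Σ_m (exp(q·k_m)/Z) v_m. -/

import Mathlib

open MeasureTheory Real Finset

open Complex in
open scoped RealInnerProductSpace in
lemma gauss_A {d : ℕ} (w : EuclideanSpace ℝ (Fin d)) :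
    Integrable (fun ω : EuclideanSpace ℝ (Fin d) => rexp (-(1/2) * ‖ω‖^2 + ⟪w, ω⟫)) ∧
    ∫ ω : EuclideanSpace ℝ (Fin d), rexp (-(1/2) * ‖ω‖^2 + ⟪w, ω⟫)
      = (2*π)^((d:ℝ)/2) * rexp (‖w‖^2/2) := by
  have hb : (0:ℝ) < (1/2 : ℂ).re := by norm_num
  have hi := GaussianFourier.integrable_cexp_neg_mul_sq_norm_add
      (V := EuclideanSpace ℝ (Fin d)) hb 1 w
  have heq : ∀ ω : EuclideanSpace ℝ (Fin d),
      cexp (-(1/2:ℂ) * ‖ω‖^2 + 1 * ⟪w, ω⟫) = ((rexp (-(1/2) * ‖ω‖^2 + ⟪w, ω⟫) : ℝ) : ℂ) := by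
    intro ω
    rw [Complex.ofReal_exp]
    push_cast
    ring_nf
  constructor
  · have : Integrable (fun ω : EuclideanSpace ℝ (Fin d) =>
        (cexp (-(1/2:ℂ) * ‖ω‖^2 + 1 * ⟪w, ω⟫)).re) := hi.re
    apply this.congr
    filter_upwards with ω
    rw [heq ω, Complex.ofReal_re]
  · have h2 := GaussianFourier.integral_cexp_neg_mul_sq_norm_add
      (V := EuclideanSpace ℝ (Fin d)) hb 1 w
    have hfr : Module.finrank ℝ (EuclideanSpace ℝ (Fin d)) = d := by
      simp [finrank_euclideanSpace]
    rw [← Complex.ofReal_inj]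
    have hint : ∫ ω : EuclideanSpace ℝ (Fin d), cexp (-(1/2:ℂ) * ‖ω‖^2 + 1 * ⟪w, ω⟫)
        = ((∫ ω : EuclideanSpace ℝ (Fin d), rexp (-(1/2) * ‖ω‖^2 + ⟪w, ω⟫) : ℝ) : ℂ) := by
      rw [integral_congr_ae (by filter_upwards with ω using heq ω)]; exact integral_ofReal
    rw [← hint, h2, hfr, Complex.ofReal_mul, Complex.ofReal_exp,
      Complex.ofReal_cpow (by positivity)]
    congr 1
    · congr 1
      · field_simp; push_cast; ring
      · push_cast; ring
    · congr 1
      push_cast; ring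

open Complex in
open scoped RealInnerProductSpace in
lemma gauss_B {d : ℕ} (a b : EuclideanSpace ℝ (Fin d)) :
    Integrable (fun ω : EuclideanSpace ℝ (Fin d) =>
      (2*π)^(-(d:ℝ)/2) * rexp (-‖ω‖^2/2) *
        (rexp ((∑ i, ω i * a i) - ‖a‖^2/2) * rexp ((∑ i, ω i * b i) - ‖b‖^2/2))) ∧
    (∫ ω : EuclideanSpace ℝ (Fin d),
      (2*π)^(-(d:ℝ)/2) * rexp (-‖ω‖^2/2) *
        (rexp ((∑ i, ω i * a i) - ‖a‖^2/2) * rexp ((∑ i, ω i * b i) - ‖b‖^2/2)))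
      = rexp (∑ i, a i * b i) := by
  set c1 : ℝ := (2*π)^(-(d:ℝ)/2) * rexp (-(‖a‖^2+‖b‖^2)/2) with hc1
  have hinner : ∀ ω : EuclideanSpace ℝ (Fin d),
      ⟪a + b, ω⟫ = (∑ i, ω i * a i) + (∑ i, ω i * b i) := by
    intro ω
    simp only [PiLp.inner_apply, RCLike.inner_apply, conj_trivial, PiLp.add_apply]
    rw [← Finset.sum_add_distrib]
    exact Finset.sum_congr rfl (fun i _ => by ring)
  have hpt : ∀ ω : EuclideanSpace ℝ (Fin d),
      (2*π)^(-(d:ℝ)/2) * rexp (-‖ω‖^2/2) *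
        (rexp ((∑ i, ω i * a i) - ‖a‖^2/2) * rexp ((∑ i, ω i * b i) - ‖b‖^2/2))
      = c1 * rexp (-(1/2) * ‖ω‖^2 + ⟪a + b, ω⟫) := by
    intro ω
    rw [hc1, hinner ω, ← Real.exp_add, mul_assoc, mul_assoc, ← Real.exp_add, ← Real.exp_add]
    congr 1
    ring
  constructor
  · exact ((gauss_A (a + b)).1.const_mul c1).congr
      (by filter_upwards with ω using (hpt ω).symm)
  · rw [integral_congr_ae (by filter_upwards with ω using hpt ω), integral_const_mul,
      (gauss_A (a + b)).2, hc1]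
    have hab : ⟪a, b⟫ = ∑ i, a i * b i := by
      simp [PiLp.inner_apply, RCLike.inner_apply, mul_comm]
    have hnorm : ‖a + b‖^2 = ‖a‖^2 + 2 * ⟪a, b⟫ + ‖b‖^2 := norm_add_sq_real a b
    have hpow : (2*π)^(-(d:ℝ)/2) * (2*π)^((d:ℝ)/2) = 1 := by
      rw [← Real.rpow_add (by positivity), neg_div, neg_add_cancel, Real.rpow_zero]
    calc (2*π)^(-(d:ℝ)/2) * rexp (-(‖a‖^2+‖b‖^2)/2) *
          ((2*π)^((d:ℝ)/2) * rexp (‖a + b‖^2/2))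
        = ((2*π)^(-(d:ℝ)/2) * (2*π)^((d:ℝ)/2)) *
          rexp (-(‖a‖^2+‖b‖^2)/2 + ‖a + b‖^2/2) := by
          rw [Real.exp_add]; ring
      _ = rexp (∑ i, a i * b i) := by
          rw [hpow, one_mul, hnorm, ← hab]
          congr 1
          ring

open MeasureTheory Real Finset


/-- Softmax attention as an expectation: with
`p_n(ω) = N(ω;0,I) Σ_m ξ(q,ω) ξ(k_m,ω) / Z` and
`f_n(ω) = (Σ_m ξ(q,ω) ξ(k_m,ω) v_m)/(Σ_{m'} ξ(q,ω) ξ(k_{m'},ω))`, where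
`Z = Σ_m exp(q·k_m)` and `ξ(x,ω) = exp(ωᵀx − ‖x‖²/2)`, the function `p_n` is
a probability density and `E_{ω∼p_n}[f_n(ω)] = Σ_m (exp(q·k_m)/Z) v_m`. -/
theorem softmax_attention_as_expectation {d M : ℕ} (hM : 0 < M)
    (q : EuclideanSpace ℝ (Fin d)) (k : Fin M → EuclideanSpace ℝ (Fin d))
    (v : Fin M → EuclideanSpace ℝ (Fin d)) :
    let ξ : EuclideanSpace ℝ (Fin d) → EuclideanSpace ℝ (Fin d) → ℝ :=
      fun z ω => Real.exp ((∑ i, ω i * z i) - ‖z‖ ^ 2 / 2)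
    let Z : ℝ := ∑ m : Fin M, Real.exp (∑ i, q i * k m i)
    let pn : EuclideanSpace ℝ (Fin d) → ℝ := fun ω =>
      (2 * π) ^ (-(d : ℝ) / 2) * Real.exp (-‖ω‖ ^ 2 / 2) *
        (∑ m : Fin M, ξ q ω * ξ (k m) ω) / Z
    let fn : EuclideanSpace ℝ (Fin d) → EuclideanSpace ℝ (Fin d) := fun ω =>
      (∑ m' : Fin M, ξ q ω * ξ (k m') ω)⁻¹ •
        ∑ m : Fin M, (ξ q ω * ξ (k m) ω) • v m
    (∀ ω, 0 ≤ pn ω) ∧ (∫ ω, pn ω = 1) ∧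
      ∫ ω, pn ω • fn ω =
        ∑ m : Fin M, (Real.exp (∑ i, q i * k m i) / Z) • v m := by
  intro ξ Z pn fn
  have hξ : ∀ z ω, ξ z ω = Real.exp ((∑ i, ω i * z i) - ‖z‖ ^ 2 / 2) := fun _ _ => rfl
  have hZdef : Z = ∑ m : Fin M, Real.exp (∑ i, q i * k m i) := rfl
  have hpndef : ∀ ω, pn ω = (2 * π) ^ (-(d : ℝ) / 2) * Real.exp (-‖ω‖ ^ 2 / 2) *
      (∑ m : Fin M, ξ q ω * ξ (k m) ω) / Z := fun _ => rfl
  have hfndef : ∀ ω, fn ω = (∑ m' : Fin M, ξ q ω * ξ (k m') ω)⁻¹ •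
      ∑ m : Fin M, (ξ q ω * ξ (k m) ω) • v m := fun _ => rfl
  clear_value ξ Z pn fn
  have hNe : (Finset.univ : Finset (Fin M)).Nonempty := univ_nonempty_iff.mpr ⟨⟨0, hM⟩⟩
  have hZ : 0 < Z := hZdef ▸ Finset.sum_pos (fun m _ => Real.exp_pos _) hNe
  -- the per-term Gaussian integrand
  set g : Fin M → EuclideanSpace ℝ (Fin d) → ℝ := fun m ω =>
    (2 * π) ^ (-(d : ℝ) / 2) * Real.exp (-‖ω‖ ^ 2 / 2) * (ξ q ω * ξ (k m) ω) with hg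
  have hgeq : ∀ m, g m = fun ω => (2 * π) ^ (-(d : ℝ) / 2) * Real.exp (-‖ω‖ ^ 2 / 2) *
      (Real.exp ((∑ i, ω i * q i) - ‖q‖ ^ 2 / 2) *
        Real.exp ((∑ i, ω i * k m i) - ‖(k m)‖ ^ 2 / 2)) := by
    intro m; funext ω; rw [hg]; simp only [hξ]
  have hgint : ∀ m, Integrable (g m) := fun m => (hgeq m) ▸ (gauss_B q (k m)).1
  have hgval : ∀ m, ∫ ω, g m ω = Real.exp (∑ i, q i * k m i) := by
    intro m
    rw [hgeq m]
    exact (gauss_B q (k m)).2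
  have hS : ∀ ω, 0 < ∑ m : Fin M, ξ q ω * ξ (k m) ω := fun ω =>
    Finset.sum_pos (fun m _ => by rw [hξ, hξ]; exact mul_pos (Real.exp_pos _) (Real.exp_pos _)) hNe
  have hpn : ∀ ω, pn ω = (∑ m : Fin M, g m ω) * Z⁻¹ := by
    intro ω
    rw [hpndef ω, hg, div_eq_mul_inv, Finset.mul_sum]
  refine ⟨?_, ?_, ?_⟩
  · intro ω
    rw [hpn ω]
    refine mul_nonneg (Finset.sum_nonneg fun m _ => ?_) (inv_nonneg.2 hZ.le)
    rw [hgeq m]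
    positivity
  · calc ∫ ω, pn ω = ∫ ω, (∑ m : Fin M, g m ω) * Z⁻¹ := by
          exact integral_congr_ae (by filter_upwards with ω using hpn ω)
      _ = (∫ ω, ∑ m : Fin M, g m ω) * Z⁻¹ := integral_mul_const _ _
      _ = (∑ m : Fin M, ∫ ω, g m ω) * Z⁻¹ := by
          rw [integral_finset_sum _ (fun m _ => hgint m)]
      _ = Z * Z⁻¹ := by rw [Finset.sum_congr rfl (fun m _ => hgval m), ← hZdef]
      _ = 1 := mul_inv_cancel₀ hZ.ne'
  · have key : ∀ (A S t : ℝ), S ≠ 0 → (A * S / Z) * (S⁻¹ * t) = A * t * Z⁻¹ := by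
      intro A S t hSne
      field_simp
    have hpt : ∀ ω, pn ω • fn ω = ∑ m : Fin M, (g m ω * Z⁻¹) • v m := by
      intro ω
      have hSne : (∑ m' : Fin M, ξ q ω * ξ (k m') ω) ≠ 0 := (hS ω).ne'
      have hfn := hfndef ω
      have hpn' := hpndef ω
      rw [hfn, Finset.smul_sum, Finset.smul_sum]
      refine Finset.sum_congr rfl (fun m _ => ?_)
      have hgm : g m ω = (2 * π) ^ (-(d : ℝ) / 2) * Real.exp (-‖ω‖ ^ 2 / 2) *
          (ξ q ω * ξ (k m) ω) := rfl
      rw [smul_smul, smul_smul]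
      congr 1
      rw [hpn', hgm, mul_assoc, key _ _ _ hSne]
    calc ∫ ω, pn ω • fn ω = ∫ ω, ∑ m : Fin M, (g m ω * Z⁻¹) • v m := by
          exact integral_congr_ae (by filter_upwards with ω using hpt ω)
      _ = ∑ m : Fin M, ∫ ω, (g m ω * Z⁻¹) • v m := by
          exact integral_finset_sum _
            (fun m _ => ((hgint m).mul_const Z⁻¹).smul_const (v m))
      _ = ∑ m : Fin M, (Real.exp (∑ i, q i * k m i) / Z) • v m := by
          refine Finset.sum_congr rfl (fun m _ => ?_)
          rw [integral_smul_const, integral_mul_const, hgval m, div_eq_mul_inv]
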